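/- arXiv:1302.5039 — 4 statements merged into one kernel-verified Lean document; each statement's English description precedes it below -/
import Mathlib

section
/- Let N ≥ 1, l ≤ L be natural numbers and let h : Fin (l+1) → ℂ be a nonzero channel tap vector. Then the N × (N+L) banded Toeplitz matrix T defined by T i j = h (L+i−j) when 0 ≤ L+i−j ≤ l and T i j = 0 otherwise has rank N (full row rank). -/
open Matrix

/-- The `N × (N+L)` banded Toeplitz channel matrix built from the taps `h`:
`T i j = h (L + i - j)` when `0 ≤ L + i - j ≤ l`, and `0` otherwise. -/
noncomputable def bandedToeplitz (N l L : ℕ) (h : Fin (l + 1) → ℂ) :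
    Matrix (Fin N) (Fin (N + L)) ℂ :=
  Matrix.of fun i j =>
    if hij : j.val ≤ L + i.val ∧ L + i.val - j.val ≤ l then
      h ⟨L + i.val - j.val, by omega⟩
    else 0

/-!
If `k` is the last index with `h k ≠ 0`, the leading entry of row `i` of the banded Toeplitz
matrix is `h k`, in column `L + i - k` (this is a valid column because `k ≤ l ≤ L`). These pivot
columns strictly increase with `i`, so the matrix is in row echelon form with a pivot in every
row, and its rank is the number of rows.
-/

theorem Matrix.rank_eq_card_of_isLeadingEntry {m n R : Type*} [Fintype m] [Fintype n]
    [LinearOrder m] [LinearOrder n] [CommRing R] [IsDomain R] {A : Matrix m n R} {p : m → n}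
    (hp : StrictMono p) (hA : ∀ i, A.IsLeadingEntry i (p i)) :
    A.rank = Fintype.card m := by
  have hpiv : A.IsPivotedBy fun i => (p i : WithTop n) :=
    isPivotedBy_iff.2 ⟨WithTop.coe_strictMono.comp hp |>.monotone,
      (WithTop.coe_strictMono.comp hp).strictMonoOn _,
      fun i => ⟨fun j hj => (hA i).1 j (WithTop.coe_lt_coe.1 hj),
        fun c hc => WithTop.coe_injective hc ▸ (hA i).2⟩⟩
  simpa using hpiv.rank_eq

theorem exists_ne_zero_forall_gt_eq_zero {ι M : Type*} [Fintype ι] [LinearOrder ι] [Zero M]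
    {f : ι → M} (hf : f ≠ 0) : ∃ k, f k ≠ 0 ∧ ∀ m, k < m → f m = 0 := by
  classical
  obtain ⟨i, hi⟩ := Function.ne_iff.1 hf
  obtain ⟨k, hk, hmax⟩ :=
    (Finset.univ.filter (f · ≠ 0)).exists_max_image id ⟨i, by simpa using hi⟩
  refine ⟨k, (Finset.mem_filter.1 hk).2, fun m hkm => ?_⟩
  by_contra hm
  exact (hmax m (by simpa using hm)).not_gt hkm

theorem bandedToeplitz_isLeadingEntry {N l L : ℕ} {h : Fin (l + 1) → ℂ} (hlL : l ≤ L)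
    {k : Fin (l + 1)} (hk : h k ≠ 0) (hgt : ∀ m, k < m → h m = 0) (i : Fin N) :
    (bandedToeplitz N l L h).IsLeadingEntry i ⟨L + i - k, by omega⟩ := by
  refine ⟨fun j hj => ?_, ?_⟩
  · have hj' : (j : ℕ) < L + i - k := hj
    simp only [bandedToeplitz, of_apply]
    split_ifs with hij
    · exact hgt _ (show (k : ℕ) < L + i - j by omega)
    · rfl
  · simp only [bandedToeplitz, of_apply]
    rw [dif_pos (by omega)]
    convert hk using 2
    ext
    simp only
    omega

theorem bandedToeplitz_rank_general (N l L : ℕ) (hlL : l ≤ L)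
    (h : Fin (l + 1) → ℂ) (hh : h ≠ 0) :
    (bandedToeplitz N l L h).rank = N := by
  obtain ⟨k, hk, hgt⟩ := exists_ne_zero_forall_gt_eq_zero hh
  have hpivot_mono : StrictMono fun i : Fin N => (⟨L + i - k, by omega⟩ : Fin (N + L)) :=
    fun a b hab => Fin.lt_def.2 (by simp only; omega)
  rw [rank_eq_card_of_isLeadingEntry hpivot_mono
    (bandedToeplitz_isLeadingEntry hlL hk hgt), Fintype.card_fin]

/-- the banded Toeplitz matrix of a nonzero tap vector has full row
rank `N`. -/
theorem bandedToeplitz_rank (N l L : ℕ) (hN : 1 ≤ N) (hlL : l ≤ L)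
    (h : Fin (l + 1) → ℂ) (hh : h ≠ 0) :
    (bandedToeplitz N l L h).rank = N :=
  bandedToeplitz_rank_general N l L hlL h hh
end

section
/- Let N, l, L be natural numbers with l ≤ L and l < N, and let h : Fin (l+1) → ℂ. Let H be the (N+L) × (N+L) circulant channel matrix of h, let A ∈ Matrix (Fin (N+L)) (Fin N) ℂ be the cyclic-prefix insertion matrix, and let B = [0_{N×L} | I_N] ∈ Matrix (Fin N) (Fin (N+L)) ℂ be the cyclic-prefix removal matrix. Then B·H·A equals the N × N circulant matrix C defined by C i j = h k whenever (i−j) mod N = k for some 0 ≤ k ≤ l, and C i j = 0 otherwise. -/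
open Matrix

/-- The `(N+L) × (N+L)` circulant channel matrix built from the taps `h`. -/
noncomputable def circulantChannel (N l L : ℕ) (h : Fin (l + 1) → ℂ) :
    Matrix (Fin (N + L)) (Fin (N + L)) ℂ :=
  Matrix.of fun i j =>
    if hd : (i.val + (N + L) - j.val) % (N + L) ≤ l then
      h ⟨(i.val + (N + L) - j.val) % (N + L), by omega⟩
    else 0

/-- The cyclic-prefix insertion matrix: `A i j = 1` if (`i ≥ L` and `j = i - L`)
or (`i < L` and `j = N - L + i`), and `0` otherwise. -/
def cpInsertion (N L : ℕ) : Matrix (Fin (N + L)) (Fin N) ℂ :=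
  Matrix.of fun i j =>
    if (L ≤ i.val ∧ j.val + L = i.val) ∨ (i.val < L ∧ j.val + L = N + i.val)
    then 1 else 0

/-- The cyclic-prefix removal matrix `B = [0_{N×L} | I_N]`. -/
def cpRemoval (N L : ℕ) : Matrix (Fin N) (Fin (N + L)) ℂ :=
  Matrix.of fun i j => if j.val = i.val + L then 1 else 0

/-- The `N × N` circulant matrix built from the taps `h`. -/
noncomputable def circulantSmall (N l : ℕ) (h : Fin (l + 1) → ℂ)
    (hlN : l < N) : Matrix (Fin N) (Fin N) ℂ :=
  Matrix.of fun i j =>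
    if hd : (i.val + N - j.val) % N ≤ l then
      h ⟨(i.val + N - j.val) % N, by omega⟩
    else 0

/-!
Column `j` of the insertion matrix has a one in row `j + L` and, when `j + L ≥ N`, a second one
in the prefix row `j + L - N`, while prefix removal keeps the rows `i + L`. So the entry `(i, j)`
of `B H A` is the sum of the channel taps at the lags `(i - j) mod (N + L)` and, if present,
`i + N - j`. Since the taps vanish beyond lag `l`, with `l ≤ L` and `l < N`, exactly one of the
two can be nonzero, and it is the tap at the circular lag `(i - j) mod N`.
-/

def tap {l : ℕ} (h : Fin (l + 1) → ℂ) (k : ℕ) : ℂ :=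
  if hk : k ≤ l then h ⟨k, by omega⟩ else 0

theorem tap_of_lt {l : ℕ} (h : Fin (l + 1) → ℂ) {k : ℕ} (hk : l < k) : tap h k = 0 :=
  dif_neg (by omega)

theorem circulantChannel_eq_circulant (N l L : ℕ) (h : Fin (l + 1) → ℂ) :
    circulantChannel N l L h = circulant fun d : Fin (N + L) => tap h d := by
  ext p q
  rw [circulant_apply, Fin.val_sub, Nat.add_comm _ p.val, ← Nat.add_sub_assoc q.is_lt.le]
  rfl

theorem circulantSmall_eq_circulant (N l : ℕ) (h : Fin (l + 1) → ℂ) (hlN : l < N) :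
    circulantSmall N l h hlN = circulant fun d : Fin N => tap h d := by
  ext i j
  rw [circulant_apply, Fin.val_sub, Nat.add_comm _ i.val, ← Nat.add_sub_assoc j.is_lt.le]
  rfl

theorem cpRemoval_mul_apply {n : Type*} {N L : ℕ} (M : Matrix (Fin (N + L)) n ℂ) (i : Fin N)
    (q : n) : (cpRemoval N L * M) i q = M (i.addNat L) q := by
  simp [mul_apply, cpRemoval, ← Fin.val_addNat, ← Fin.ext_iff]

theorem mul_cpInsertion_apply {m : Type*} {N L : ℕ} (M : Matrix m (Fin (N + L)) ℂ) (p : m)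
    (j : Fin N) :
    (M * cpInsertion N L) p j =
      M p (j.addNat L) + if hj : N ≤ j + L then M p ⟨j + L - N, by omega⟩ else 0 := by
  have hjN := j.is_lt
  rw [mul_apply]
  split_ifs with hj
  · rw [Fintype.sum_eq_add (j.addNat L) ⟨j + L - N, by omega⟩ (by simp [Fin.ext_iff]; omega)]
    · simp only [cpInsertion, of_apply, Fin.val_addNat]
      rw [if_pos (Or.inl ⟨by omega, trivial⟩), if_pos (Or.inr ⟨by omega, by omega⟩), mul_one, mul_one]
    · rintro q ⟨hq, hq'⟩
      simp only [ne_eq, Fin.ext_iff, Fin.val_addNat] at hq hq'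
      simp only [cpInsertion, of_apply]
      rw [if_neg, mul_zero]; omega
  · rw [Fintype.sum_eq_single (j.addNat L), add_zero]
    · simp [cpInsertion]
    · intro q hq
      simp only [ne_eq, Fin.ext_iff, Fin.val_addNat] at hq
      simp only [cpInsertion, of_apply]
      rw [if_neg, mul_zero]; omega

theorem cpRemoval_mul_circulant_mul_cpInsertion {N l L : ℕ} (hlL : l ≤ L) (hlN : l < N)
    {f : ℕ → ℂ} (hf : ∀ k, l < k → f k = 0) :
    cpRemoval N L * circulant (fun d : Fin (N + L) => f d) * cpInsertion N L =
      circulant fun d : Fin N => f d := by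
  ext i j
  simp only [mul_cpInsertion_apply, cpRemoval_mul_apply, circulant_apply]
  have hwrap (hj : N ≤ j + L) :
      ((i.addNat L - ⟨j + L - N, by omega⟩ : Fin (N + L)) : ℕ) = N + i - j := by
    rw [Fin.coe_sub_iff_le.2 (by simp only [Fin.le_def, Fin.val_addNat]; omega)]
    simp only [Fin.val_addNat]
    omega
  rcases le_or_gt j i with hji | hij
  · have hmain : ((i.addNat L - j.addNat L : Fin (N + L)) : ℕ) = i - j := by
      rw [Fin.coe_sub_iff_le.2 (by simp only [Fin.le_def, Fin.val_addNat]; omega),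
        Fin.val_addNat, Fin.val_addNat]
      omega
    rw [hmain, Fin.coe_sub_iff_le.2 hji]
    split_ifs with hj
    · rw [hwrap hj, hf (N + i - j) (by omega), add_zero]
    · rw [add_zero]
  · have hmain : ((i.addNat L - j.addNat L : Fin (N + L)) : ℕ) = N + L + i - j := by
      rw [Fin.coe_sub_iff_lt.2 (by simp only [Fin.lt_def, Fin.val_addNat]; omega),
        Fin.val_addNat, Fin.val_addNat]
      omega
    rw [hmain, hf (N + L + i - j) (by omega), zero_add, Fin.coe_sub_iff_lt.2 hij]
    split_ifs with hj
    · rw [hwrap hj]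
    · exact (hf _ (by omega)).symm

/-- with a cyclic prefix of length `L ≥ l`, prefix removal turns
the linear convolution into a circular one: `B·H·A = C`. -/
theorem cp_removal_circularizes (N l L : ℕ) (hlL : l ≤ L) (hlN : l < N)
    (h : Fin (l + 1) → ℂ) :
    cpRemoval N L * circulantChannel N l L h * cpInsertion N L =
      circulantSmall N l h hlN := by
  rw [circulantChannel_eq_circulant, circulantSmall_eq_circulant]
  exact cpRemoval_mul_circulant_mul_cpInsertion hlL hlN fun k hk => tap_of_lt h hk
end

section
/- Let N ≥ L ≥ 1 and let G ∈ Matrix (Fin N) (Fin L) ℂ have a singular value decomposition G = U·D·Vᴴ, with U, V unitary, D i j = σ_j if i = j and 0 otherwise, σ_j ≥ 0. Then for every positive semidefinite Σ ∈ Matrix (Fin L) (Fin L) ℂ, the determinant det(I_N + G·Σ·Gᴴ) is a nonnegative real number and satisfies det(I_N + G·Σ·Gᴴ) ≤ ∏_{i=1}^{L} (1 + σ_i² · q_i), where q_i = Re((Vᴴ·Σ·V) i i) ≥ 0 and ∑_{i=1}^{L} q_i = Re(trace Σ). -/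
open Matrix
open scoped ComplexOrder

/-!
Write `T = Vᴴ Σ V` and `E = diag σ`. Since `Uᴴ U = 1` and `det (1 + A B) = det (1 + B A)`, the
SVD gives `det (1 + G Σ Gᴴ) = det (1 + T Dᴴ D) = det (1 + E T Eᴴ)`. The matrix `1 + E T Eᴴ` is
positive definite with diagonal entries `1 + σᵢ² qᵢ`, so Hadamard's inequality `det A ≤ ∏ Aᵢᵢ`
concludes. Hadamard's inequality itself comes from the LDL decomposition `A = P diag(d) Pᴴ`
with `P` lower triangular and `d ≥ 0`: `det A = ∏ |Pᵢᵢ|² dᵢ`, and each `Aᵢᵢ = ∑ⱼ |Pᵢⱼ|² dⱼ`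
dominates its own factor `|Pᵢᵢ|² dᵢ`.
-/

namespace Matrix

section Hadamard

variable {𝕜 : Type*} [RCLike 𝕜]
  {n : Type*} [Fintype n] [LinearOrder n] [WellFoundedLT n] [LocallyFiniteOrderBot n]

theorem PosDef.det_le_prod_diag {A : Matrix n n 𝕜} (hA : A.PosDef) : A.det ≤ ∏ i, A i i := by
  set P := LDL.lower hA
  set d := LDL.diagEntries hA
  have hPdP : P * diagonal d * Pᴴ = A := LDL.lower_conj_diag hA
  have hd : ∀ j, 0 ≤ d j := fun j => by
    have h : (diagonal d).PosSemidef := by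
      rw [← LDL.diag, LDL.diag_eq_lowerInv_conj]
      exact hA.posSemidef.mul_mul_conjTranspose_same _
    simpa using h.diag_nonneg (i := j)
  have hP : P.IsLowerTriangular :=
    blockTriangular_inv_of_blockTriangular fun _ _ hij => LDL.lowerInv_triangular hA hij
  have hdet : A.det = ∏ i, P i i * d i * star (P i i) := by
    rw [← hPdP, det_mul, det_mul, det_conjTranspose, det_diagonal, det_of_isLowerTriangular P hP,
      star_prod, ← Finset.prod_mul_distrib, ← Finset.prod_mul_distrib]
  have hdiag : ∀ i, A i i = ∑ j, P i j * d j * star (P i j) := fun i => by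
    rw [← hPdP, mul_apply]
    simp only [mul_diagonal, conjTranspose_apply]
  rw [hdet]
  refine Finset.prod_le_prod (fun i _ => star_right_conjugate_nonneg (hd i) _) fun i _ => ?_
  rw [hdiag i]
  exact Finset.single_le_sum (fun j _ => star_right_conjugate_nonneg (hd j) (P i j))
    (Finset.mem_univ i)

end Hadamard

theorem conjTranspose_mul_self_of_rectangular_diagonal {α : Type*} [Semiring α] [StarRing α]
    {N L : ℕ} (hLN : L ≤ N) {σ : Fin L → α} {D : Matrix (Fin N) (Fin L) α}
    (hD : ∀ i j, D i j = if i.val = j.val then σ j else 0) :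
    Dᴴ * D = (diagonal σ)ᴴ * diagonal σ := by
  ext j k
  rw [mul_apply, Finset.sum_eq_single (Fin.castLE hLN j)]
  · by_cases hjk : j = k
    · subst hjk; simp [hD]
    · simp [hD, Fin.val_ne_of_ne hjk, hjk]
  · intro b _ hb
    rw [conjTranspose_apply, hD, if_neg fun h => hb (Fin.ext (by simpa using h)), star_zero,
      zero_mul]
  · simp

theorem det_one_add_svd_mul_mul_conjTranspose {α : Type*} [CommRing α] [StarRing α]
    {m n : Type*} [Fintype m] [DecidableEq m] [Fintype n] [DecidableEq n]
    {U : Matrix m m α} (hU : U ∈ unitaryGroup m α) (D : Matrix m n α) (V S : Matrix n n α) :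
    det (1 + U * D * Vᴴ * S * (U * D * Vᴴ)ᴴ) = det (1 + Vᴴ * S * V * (Dᴴ * D)) := by
  have hUU : Uᴴ * U = 1 := hU.1
  calc det (1 + U * D * Vᴴ * S * (U * D * Vᴴ)ᴴ)
      = det (1 + U * (D * (Vᴴ * S * V) * Dᴴ * Uᴴ)) := by
        simp only [conjTranspose_mul, conjTranspose_conjTranspose, Matrix.mul_assoc]
    _ = det (1 + D * (Vᴴ * S * V * Dᴴ)) := by
        rw [det_one_add_mul_comm, Matrix.mul_assoc _ Uᴴ, hUU, Matrix.mul_one, Matrix.mul_assoc]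
    _ = det (1 + Vᴴ * S * V * (Dᴴ * D)) := by
        rw [det_one_add_mul_comm, Matrix.mul_assoc]

end Matrix

theorem hadamard_bound_logdet_general (N L : ℕ) (hLN : L ≤ N)
    (G : Matrix (Fin N) (Fin L) ℂ)
    (U : Matrix (Fin N) (Fin N) ℂ) (hU : U ∈ Matrix.unitaryGroup (Fin N) ℂ)
    (V : Matrix (Fin L) (Fin L) ℂ) (hV : V ∈ Matrix.unitaryGroup (Fin L) ℂ)
    (σ : Fin L → ℝ)
    (D : Matrix (Fin N) (Fin L) ℂ)
    (hD : ∀ (i : Fin N) (j : Fin L),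
      D i j = if i.val = j.val then (σ j : ℂ) else 0)
    (hG : G = U * D * Vᴴ) :
    ∀ S : Matrix (Fin L) (Fin L) ℂ, S.PosSemidef →
      (∀ i : Fin L, 0 ≤ ((Vᴴ * S * V) i i).re) ∧
      (∑ i : Fin L, ((Vᴴ * S * V) i i).re) = S.trace.re ∧
      ((1 + G * S * Gᴴ).det).im = 0 ∧
      0 ≤ ((1 + G * S * Gᴴ).det).re ∧
      ((1 + G * S * Gᴴ).det).re ≤
        ∏ i : Fin L, (1 + (σ i) ^ 2 * ((Vᴴ * S * V) i i).re) := by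
  intro S hS
  set T := Vᴴ * S * V
  set E : Matrix (Fin L) (Fin L) ℂ := diagonal fun i => (σ i : ℂ)
  have hT : T.PosSemidef := hS.conjTranspose_mul_mul_same V
  have htrace : T.trace = S.trace := by
    rw [trace_mul_cycle, show V * Vᴴ = 1 from hV.2, Matrix.one_mul]
  have hP : (1 + E * T * Eᴴ).PosDef :=
    PosDef.one.add_posSemidef (hT.mul_mul_conjTranspose_same E)
  have hdet : (1 + G * S * Gᴴ).det = (1 + E * T * Eᴴ).det := by
    rw [hG, det_one_add_svd_mul_mul_conjTranspose hU,
      conjTranspose_mul_self_of_rectangular_diagonal hLN hD, ← Matrix.mul_assoc,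
      det_one_add_mul_comm, ← Matrix.mul_assoc]
  have hdiag : ∀ i, (1 + E * T * Eᴴ) i i = ((1 + σ i ^ 2 * (T i i).re : ℝ) : ℂ) := fun i => by
    have hTii : ((T i i).re : ℂ) = T i i := hT.isHermitian.coe_re_apply_self i
    rw [Matrix.add_apply, one_apply_eq, diagonal_conjTranspose, mul_diagonal, diagonal_mul]
    push_cast
    rw [hTii, Pi.star_apply, Complex.star_def, Complex.conj_ofReal]
    ring
  have hdet_nonneg := Complex.nonneg_iff.mp hP.posSemidef.det_nonneg
  have hdet_le := Complex.le_def.mp hP.det_le_prod_diag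
  simp only [hdiag, ← Complex.ofReal_prod, Complex.ofReal_re] at hdet_le
  refine ⟨fun i => (Complex.nonneg_iff.mp hT.diag_nonneg).1, ?_, ?_⟩
  · rw [← htrace, trace, Complex.re_sum]
    rfl
  · rw [hdet]
    exact ⟨hdet_nonneg.2.symm, hdet_nonneg.1, hdet_le.1⟩

/-- Hadamard-inequality step. With `G = U·D·Vᴴ` an SVD of `G` and
`Σ` positive semidefinite, setting `qᵢ = Re((Vᴴ·Σ·V)ᵢᵢ)`, the `qᵢ` are
nonnegative with `∑ qᵢ = Re(trace Σ)`, and `det(I_N + G·Σ·Gᴴ)` is a nonnegative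
real number bounded by `∏ᵢ (1 + σᵢ² qᵢ)`. -/
theorem hadamard_bound_logdet (N L : ℕ) (hL : 1 ≤ L) (hLN : L ≤ N)
    (G : Matrix (Fin N) (Fin L) ℂ)
    (U : Matrix (Fin N) (Fin N) ℂ) (hU : U ∈ Matrix.unitaryGroup (Fin N) ℂ)
    (V : Matrix (Fin L) (Fin L) ℂ) (hV : V ∈ Matrix.unitaryGroup (Fin L) ℂ)
    (σ : Fin L → ℝ) (hσ : ∀ j, 0 ≤ σ j)
    (D : Matrix (Fin N) (Fin L) ℂ)
    (hD : ∀ (i : Fin N) (j : Fin L),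
      D i j = if i.val = j.val then (σ j : ℂ) else 0)
    (hG : G = U * D * Vᴴ) :
    ∀ S : Matrix (Fin L) (Fin L) ℂ, S.PosSemidef →
      (∀ i : Fin L, 0 ≤ ((Vᴴ * S * V) i i).re) ∧
      (∑ i : Fin L, ((Vᴴ * S * V) i i).re) = S.trace.re ∧
      ((1 + G * S * Gᴴ).det).im = 0 ∧
      0 ≤ ((1 + G * S * Gᴴ).det).re ∧
      ((1 + G * S * Gᴴ).det).re ≤
        ∏ i : Fin L, (1 + (σ i) ^ 2 * ((Vᴴ * S * V) i i).re) :=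
  hadamard_bound_logdet_general N L hLN G U hU V hV σ D hD hG
end

section
/- (Optimal CIA precoder, Lemma 1.) Let N, L ≥ 1, let T ∈ Matrix (Fin N) (Fin (N+L)) ℂ have rank N (the zero-forcing interference constraint matrix), let W ∈ Matrix (Fin N) (Fin (N+L)) ℂ (the noise-whitened secondary channel S_η^{-1/2}·H̃_ss), and let c > 0 be a real number (the total power budget). Then there exist a semi-unitary matrix E ∈ Matrix (Fin (N+L)) (Fin L) ℂ (Eᴴ·E = I_L) with T·E = 0 and a vector p : Fin L → ℝ with p_i ≥ 0 and ∑_{i=1}^{L} p_i ≤ c, such that S★ = E·diag(p)·Eᴴ is positive semidefinite, satisfies T·S★ = 0 and Re(trace S★) ≤ c, and for every positive semidefinite S ∈ Matrix (Fin (N+L)) (Fin (N+L)) ℂ with T·S = 0 and Re(trace S) ≤ c one has Re(det(I_N + W·S·Wᴴ)) ≤ Re(det(I_N + W·S★·Wᴴ)). That is, the constrained log-det spectral-efficiency maximization is solved by a semi-unitary precoder with a diagonal (water-filling) power loading. -/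
/-!
Since `T` has rank `N`, its kernel is `L`-dimensional; an orthonormal basis of it gives the
columns of a semi-unitary `E₀` with range `E₀ = ker T`. Every feasible `S` then equals `E₀ Q E₀ᴴ` with `Q = E₀ᴴ S E₀` positive
semidefinite of the same trace, so the problem becomes the maximization of a continuous function
of `Q` over the compact set of positive semidefinite `L × L` matrices of trace at most `c`.
Diagonalizing a maximizer as `Q₀ = U diag(p) Uᴴ` gives the precoder `E = E₀ U`.
-/

open Matrix
open scoped ComplexOrder

namespace Matrix

variable {𝕜 : Type*} [RCLike 𝕜] {m n ι o : Type*} [Fintype n] [Fintype ι] [Fintype o]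

theorem range_mulVecLin_le_ker_iff {T : Matrix m n 𝕜} {S : Matrix n o 𝕜} :
    LinearMap.range S.mulVecLin ≤ LinearMap.ker T.mulVecLin ↔ T * S = 0 := by
  classical
  rw [LinearMap.range_le_ker_iff, ← mulVecLin_mul, ← toLin'_apply', LinearEquiv.map_eq_zero_iff]

theorem exists_conjTranspose_mul_self_eq_one_range_eq_ker [Fintype m] [DecidableEq n]
    (T : Matrix m n 𝕜) {k : ℕ} (hk : T.rank + k = Fintype.card n) :
    ∃ E : Matrix n (Fin k) 𝕜,
      Eᴴ * E = 1 ∧ LinearMap.range E.mulVecLin = LinearMap.ker T.mulVecLin := by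
  have hK : Module.finrank 𝕜 (LinearMap.ker T.mulVecLin) = k := by
    have := LinearMap.finrank_range_add_finrank_ker T.mulVecLin
    rw [Module.finrank_fintype_fun_eq_card, ← rank] at this
    omega
  let K : Submodule 𝕜 (EuclideanSpace 𝕜 n) :=
    (LinearMap.ker T.mulVecLin).comap (WithLp.linearEquiv 2 𝕜 (n → 𝕜) : _ →ₗ[𝕜] n → 𝕜)
  let B : OrthonormalBasis (Fin k) 𝕜 K := (stdOrthonormalBasis 𝕜 K).reindex
    (finCongr <| ((WithLp.linearEquiv 2 𝕜 (n → 𝕜)).ofSubmodule' _).finrank_eq.trans hK)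
  let E : Matrix n (Fin k) 𝕜 := of fun i j => (B j : EuclideanSpace 𝕜 n) i
  have hE : Eᴴ * E = 1 := by
    rw [← gram_eq_one_iff_orthonormal.mpr (B.orthonormal.comp_linearIsometry K.subtypeₗᵢ),
      gram_eq_conjTranspose_mul (EuclideanSpace.basisFun n 𝕜)]
    rfl
  refine ⟨E, hE, Submodule.eq_of_le_of_finrank_eq ?_ ?_⟩
  · rw [range_mulVecLin, Submodule.span_le]
    rintro _ ⟨j, rfl⟩
    exact (B j).2
  · rw [hK, ← rank, ← rank_conjTranspose_mul_self, hE, rank_one, Fintype.card_fin]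

theorem mul_conjTranspose_mul_eq_self [DecidableEq ι] {E : Matrix n ι 𝕜} (hE : Eᴴ * E = 1)
    {S : Matrix n o 𝕜} (hS : LinearMap.range S.mulVecLin ≤ LinearMap.range E.mulVecLin) :
    E * Eᴴ * S = S := by
  classical
  refine ext_of_mulVec_single fun j => ?_
  obtain ⟨c, hc⟩ := hS (LinearMap.mem_range_self S.mulVecLin (Pi.single j 1))
  simp only [mulVecLin_apply] at hc
  rw [← mulVec_mulVec, ← hc, mulVec_mulVec, Matrix.mul_assoc, hE, Matrix.mul_one]

theorem mul_conjTranspose_mul_mul_mul_conjTranspose_eq_self [DecidableEq ι] {E : Matrix n ι 𝕜}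
    (hE : Eᴴ * E = 1) {S : Matrix n n 𝕜} (hS : S.IsHermitian)
    (hrange : LinearMap.range S.mulVecLin ≤ LinearMap.range E.mulVecLin) :
    E * (Eᴴ * S * E) * Eᴴ = S := by
  have hleft := mul_conjTranspose_mul_eq_self hE hrange
  have hright : S * (E * Eᴴ) = S := by
    simpa only [conjTranspose_mul, conjTranspose_conjTranspose, hS.eq, Matrix.mul_assoc]
      using congrArg conjTranspose hleft
  calc E * (Eᴴ * S * E) * Eᴴ = E * Eᴴ * S * (E * Eᴴ) := by simp only [Matrix.mul_assoc]
    _ = S := by rw [hleft, hright]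

theorem trace_mul_mul_conjTranspose [DecidableEq ι] {E : Matrix n ι 𝕜} (hE : Eᴴ * E = 1)
    (Q : Matrix ι ι 𝕜) : (E * Q * Eᴴ).trace = Q.trace := by
  rw [trace_mul_cycle, hE, Matrix.one_mul]

theorem PosSemidef.exists_eq_mul_diagonal_mul_conjTranspose [DecidableEq ι] {Q : Matrix ι ι 𝕜}
    (hQ : Q.PosSemidef) : ∃ (U : Matrix ι ι 𝕜) (p : ι → ℝ),
      Uᴴ * U = 1 ∧ (∀ i, 0 ≤ p i) ∧ Q = U * diagonal (fun i => (p i : 𝕜)) * Uᴴ := by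
  refine ⟨hQ.isHermitian.eigenvectorUnitary, hQ.isHermitian.eigenvalues, ?_,
    hQ.eigenvalues_nonneg, ?_⟩
  · rw [← star_eq_conjTranspose]
    exact mem_unitaryGroup_iff'.mp hQ.isHermitian.eigenvectorUnitary.2
  · conv_lhs => rw [hQ.isHermitian.spectral_theorem, Unitary.conjStarAlgAut_apply]
    rfl

section Frobenius

attribute [local instance] frobeniusNormedAddCommGroup frobeniusNormedSpace

theorem frobenius_norm_sq_eq_re_trace [Fintype m] (R : Matrix m n 𝕜) :
    ‖R‖ ^ 2 = RCLike.re (Rᴴ * R).trace := by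
  rw [frobenius_norm_def, ← Real.sqrt_eq_rpow, Real.sq_sqrt (by positivity), trace, map_sum,
    Finset.sum_comm]
  refine Finset.sum_congr rfl fun j _ => ?_
  rw [diag_apply, mul_apply, map_sum]
  refine Finset.sum_congr rfl fun i _ => ?_
  rw [conjTranspose_apply, RCLike.star_def, RCLike.conj_mul, Real.rpow_two]
  norm_cast

/-- A PSD matrix of trace at most `c` is `Rᴴ * R` with `R` in the Frobenius ball of radius `√c`,
so a continuous function attains its maximum on such matrices. -/
theorem exists_forall_le_of_posSemidef_of_re_trace_le [DecidableEq ι] {f : Matrix ι ι 𝕜 → ℝ}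
    (hf : Continuous f) {c : ℝ} (hc : 0 ≤ c) :
    ∃ Q₀ : Matrix ι ι 𝕜, Q₀.PosSemidef ∧ RCLike.re Q₀.trace ≤ c ∧
      ∀ Q : Matrix ι ι 𝕜, Q.PosSemidef → RCLike.re Q.trace ≤ c → f Q ≤ f Q₀ := by
  have : ProperSpace (Matrix ι ι 𝕜) := FiniteDimensional.proper 𝕜 _
  have mem_ball (R : Matrix ι ι 𝕜) :
      R ∈ Metric.closedBall 0 √c ↔ RCLike.re (Rᴴ * R).trace ≤ c := by
    rw [mem_closedBall_zero_iff, Real.le_sqrt (norm_nonneg R) hc, frobenius_norm_sq_eq_re_trace]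
  obtain ⟨R₀, hR₀, hmax⟩ := (isCompact_closedBall (0 : Matrix ι ι 𝕜) √c).exists_isMaxOn
    (Metric.nonempty_closedBall.mpr (Real.sqrt_nonneg c))
    (hf.comp (continuous_id.matrix_conjTranspose.matrix_mul continuous_id)).continuousOn
  refine ⟨R₀ᴴ * R₀, posSemidef_conjTranspose_mul_self R₀, (mem_ball R₀).mp hR₀, ?_⟩
  intro Q hQ hQc
  open scoped MatrixOrder in
  obtain ⟨R, rfl⟩ := CStarAlgebra.nonneg_iff_eq_star_mul_self.mp hQ.nonneg
  exact hmax ((mem_ball R).mpr hQc)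

end Frobenius

end Matrix

theorem optimal_cia_precoder_general (N L : ℕ)
    (T : Matrix (Fin N) (Fin (N + L)) ℂ) (hT : T.rank = N)
    (W : Matrix (Fin N) (Fin (N + L)) ℂ) (c : ℝ) (hc : 0 < c) :
    ∃ (E : Matrix (Fin (N + L)) (Fin L) ℂ) (p : Fin L → ℝ),
      Eᴴ * E = 1 ∧
      T * E = 0 ∧
      (∀ i, 0 ≤ p i) ∧
      (∑ i : Fin L, p i) ≤ c ∧
      (E * Matrix.diagonal (fun i => (p i : ℂ)) * Eᴴ).PosSemidef ∧
      T * (E * Matrix.diagonal (fun i => (p i : ℂ)) * Eᴴ) = 0 ∧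
      ((E * Matrix.diagonal (fun i => (p i : ℂ)) * Eᴴ).trace).re ≤ c ∧
      ∀ S : Matrix (Fin (N + L)) (Fin (N + L)) ℂ,
        S.PosSemidef → T * S = 0 → (S.trace).re ≤ c →
          ((1 + W * S * Wᴴ).det).re ≤
            ((1 + W * (E * Matrix.diagonal (fun i => (p i : ℂ)) * Eᴴ) * Wᴴ).det).re := by
  obtain ⟨E₀, hE₀, hrange⟩ :=
    exists_conjTranspose_mul_self_eq_one_range_eq_ker T (k := L) (by rw [hT, Fintype.card_fin])
  have hTE₀ : T * E₀ = 0 := range_mulVecLin_le_ker_iff.mp hrange.le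
  obtain ⟨Q₀, hQ₀, htrQ₀, hmax⟩ := exists_forall_le_of_posSemidef_of_re_trace_le
    (f := fun Q : Matrix (Fin L) (Fin L) ℂ => ((1 + W * (E₀ * Q * E₀ᴴ) * Wᴴ).det).re) (by fun_prop) hc.le
  obtain ⟨U, p, hU, hp, hQ₀U⟩ := hQ₀.exists_eq_mul_diagonal_mul_conjTranspose
  have hS₀ : E₀ * U * diagonal (fun i => (p i : ℂ)) * (E₀ * U)ᴴ = E₀ * Q₀ * E₀ᴴ := by
    simp only [hQ₀U, conjTranspose_mul, Matrix.mul_assoc]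
    rfl
  refine ⟨E₀ * U, p, ?_, by rw [← Matrix.mul_assoc, hTE₀, Matrix.zero_mul], hp, ?_, ?_, ?_, ?_, ?_⟩
  · rw [conjTranspose_mul, Matrix.mul_assoc, ← Matrix.mul_assoc E₀ᴴ, hE₀, Matrix.one_mul, hU]
  · simpa [hQ₀U, trace_mul_mul_conjTranspose hU] using htrQ₀
  · exact hS₀ ▸ hQ₀.mul_mul_conjTranspose_same E₀
  · rw [hS₀, ← Matrix.mul_assoc, ← Matrix.mul_assoc, hTE₀, Matrix.zero_mul, Matrix.zero_mul]
  · rwa [hS₀, trace_mul_mul_conjTranspose hE₀]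
  · intro S hS hTS htrS
    have hSQ : E₀ * (E₀ᴴ * S * E₀) * E₀ᴴ = S :=
      mul_conjTranspose_mul_mul_mul_conjTranspose_eq_self hE₀ hS.isHermitian
        (hrange ▸ range_mulVecLin_le_ker_iff.mpr hTS)
    rw [hS₀, ← hSQ]
    refine hmax _ (hS.conjTranspose_mul_mul_same E₀) ?_
    rwa [← trace_mul_mul_conjTranspose hE₀, hSQ]

/-- Optimal CIA precoder, Lemma 1: the constrained log-det
spectral-efficiency maximization
`max det(I_N + W·S·Wᴴ)` s.t. `S ⪰ 0`, `T·S = 0`, `Re(tr S) ≤ c`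
is solved by `S★ = E·diag(p)·Eᴴ` for some semi-unitary `E` with `T·E = 0` and
some nonnegative (water-filling) power loading `p` with `∑ pᵢ ≤ c`. -/
theorem optimal_cia_precoder (N L : ℕ) (hN : 1 ≤ N) (hL : 1 ≤ L)
    (T : Matrix (Fin N) (Fin (N + L)) ℂ) (hT : T.rank = N)
    (W : Matrix (Fin N) (Fin (N + L)) ℂ) (c : ℝ) (hc : 0 < c) :
    ∃ (E : Matrix (Fin (N + L)) (Fin L) ℂ) (p : Fin L → ℝ),
      Eᴴ * E = 1 ∧
      T * E = 0 ∧
      (∀ i, 0 ≤ p i) ∧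
      (∑ i : Fin L, p i) ≤ c ∧
      (E * Matrix.diagonal (fun i => (p i : ℂ)) * Eᴴ).PosSemidef ∧
      T * (E * Matrix.diagonal (fun i => (p i : ℂ)) * Eᴴ) = 0 ∧
      ((E * Matrix.diagonal (fun i => (p i : ℂ)) * Eᴴ).trace).re ≤ c ∧
      ∀ S : Matrix (Fin (N + L)) (Fin (N + L)) ℂ,
        S.PosSemidef → T * S = 0 → (S.trace).re ≤ c →
          ((1 + W * S * Wᴴ).det).re ≤
            ((1 + W * (E * Matrix.diagonal (fun i => (p i : ℂ)) * Eᴴ) * Wᴴ).det).re :=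
  optimal_cia_precoder_general N L T hT W c hc
end
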